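/- There is a universal constant C > 0 with the following property. Let α = (α₁,α₂) ∈ ℝ², A ∈ ℝ, u a Lipschitz divergence-free vector field on ℝ², and let q be a C² function on ℝ² satisfying Δq - A u·∇q + |∇q|² ≥ 0, q(x₁+1,x₂) = q(x₁,x₂) + α₁, q(x₁,x₂+1) = q(x₁,x₂) + α₂, and ∫_{[0,1]²} q dx = 0. Then q(x) ≤ C(‖∇q‖_{L²([0,1]²)} + |α₁| + |α₂|) for all x ∈ [0,1]². -/

import Mathlib

/-! Choose a column `x₁ = a` and a row `x₂ = b` of `[0,1]²` on which the one-dimensional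
`L²` norms of `∂₂q` and `∂₁q` are at most their averages. By the fundamental theorem of calculus
and Cauchy–Schwarz, `q` differs by at most `‖∇q‖_{L²}` between any two points of such a line,
and, since `q` has mean zero, `|q(a,b)| ≤ 2‖∇q‖_{L²}`; so `|q| ≤ 3‖∇q‖_{L²}` on both lines.
The shift conditions carry this to the boundary of the square `[a-1,a+1] × [b-1,b+1] ⊇ [0,1]²`
at the cost of `|α₁| + |α₂|`, and the maximum principle moves the bound inside: an interior
maximum of `q + ε e^{l x₁}` is impossible for `l ≥ A u₁ + 1`, since there `∇q = -c e₁` and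
`Δq ≤ -l c` with `0 < c ≤ 1/2` contradict the differential inequality. -/

open MeasureTheory Real
open scoped RealInnerProductSpace

noncomputable section

/-- The unit periodicity cell `[0,1]²`. -/
def cube2 : Set (EuclideanSpace ℝ (Fin 2)) :=
  {x | ∀ i, x i ∈ Set.Icc (0 : ℝ) 1}

/-- The Laplacian of a scalar function on `ℝ²`. -/
def lap (f : EuclideanSpace ℝ (Fin 2) → ℝ) (x : EuclideanSpace ℝ (Fin 2)) : ℝ :=
  ∑ i, ⟪fderiv ℝ (gradient f) x (EuclideanSpace.single i 1), EuclideanSpace.single i 1⟫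

/-- The divergence of a vector field on `ℝ²`. -/
def divg (u : EuclideanSpace ℝ (Fin 2) → EuclideanSpace ℝ (Fin 2))
    (x : EuclideanSpace ℝ (Fin 2)) : ℝ :=
  ∑ i, fderiv ℝ u x (EuclideanSpace.single i 1) i

open Set Filter Topology

local notation "ℝ²" => EuclideanSpace ℝ (Fin 2)

namespace PeriodicSubsolution

def μI : Measure ℝ := volume.restrict (Icc 0 1)

instance : IsProbabilityMeasure μI := ⟨by simp [μI]⟩

theorem abs_sub_le_integral_abs_deriv {f f' : ℝ → ℝ} (hf : ∀ r, HasDerivAt f (f' r) r)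
    (hf' : Continuous f') {s t : ℝ} (hs : s ∈ Icc (0 : ℝ) 1) (ht : t ∈ Icc (0 : ℝ) 1) :
    |f s - f t| ≤ ∫ r, |f' r| ∂μI := by
  wlog hts : t ≤ s generalizing s t
  · rw [abs_sub_comm]
    exact this ht hs (le_of_not_ge hts)
  rw [← intervalIntegral.integral_eq_sub_of_hasDerivAt (fun r _ => hf r)
    (hf'.intervalIntegrable t s)]
  calc |∫ r in t..s, f' r| ≤ ∫ r in t..s, |f' r| :=
        intervalIntegral.abs_integral_le_integral_abs hts
    _ = ∫ r in Ioc t s, |f' r| := intervalIntegral.integral_of_le hts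
    _ ≤ ∫ r, |f' r| ∂μI :=
        setIntegral_mono_set (hf'.abs.integrableOn_Icc) (Eventually.of_forall fun _ => abs_nonneg _)
          (Ioc_subset_Icc_self.trans (Icc_subset_Icc ht.1 hs.2)).eventuallyLE

theorem integral_abs_le_of_integral_sq_le {X : Type*} [MeasurableSpace X] {ν : Measure X}
    [IsProbabilityMeasure ν] {g : X → ℝ} (hg : Integrable g ν)
    (hg2 : Integrable (fun x => g x ^ 2) ν)
    {G : ℝ} (hG : 0 ≤ G) (h : ∫ x, g x ^ 2 ∂ν ≤ G ^ 2) : ∫ x, |g x| ∂ν ≤ G := by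
  have hjensen : (∫ x, |g x| ∂ν) ^ 2 ≤ ∫ x, |g x| ^ 2 ∂ν :=
    (convexOn_pow 2).map_integral_le (continuous_pow 2).continuousOn isClosed_Ici
      (Eventually.of_forall fun x => abs_nonneg (g x)) hg.abs
      (by simpa [Function.comp_def] using hg2)
  simp only [sq_abs] at hjensen
  exact abs_le_of_sq_le_sq' (hjensen.trans h) hG |>.2

theorem exists_mem_Icc_le_integral {T : ℝ → ℝ} (hT : Integrable T μI) :
    ∃ a ∈ Icc (0 : ℝ) 1, T a ≤ ∫ r, T r ∂μI := by
  obtain ⟨a, ha, hle⟩ := exists_notMem_null_le_integral hT (N := (Icc (0 : ℝ) 1)ᶜ)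
    (by simp [μI])
  exact ⟨a, not_not.1 ha, hle⟩

def μI2 : Measure (ℝ × ℝ) := μI.prod μI

instance : IsProbabilityMeasure μI2 := by unfold μI2; infer_instance

theorem μI2_eq : μI2 = volume.restrict (Icc (0 : ℝ) 1 ×ˢ Icc (0 : ℝ) 1) := by
  rw [μI2, μI, Measure.prod_restrict, ← Measure.volume_eq_prod]

theorem integrable_μI2_of_continuous {g : ℝ × ℝ → ℝ} (hg : Continuous g) : Integrable g μI2 := by
  rw [μI2_eq]
  exact hg.continuousOn.integrableOn_compact (isCompact_Icc.prod isCompact_Icc)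

theorem exists_line_integral_abs_le {d : ℝ × ℝ → ℝ} (hd : Continuous d) {G : ℝ} (hG : 0 ≤ G)
    (h : ∫ p, d p ^ 2 ∂μI2 ≤ G ^ 2) : ∃ a ∈ Icc (0 : ℝ) 1, ∫ t, |d (a, t)| ∂μI ≤ G := by
  have hd2 := integrable_μI2_of_continuous (hd.pow 2)
  obtain ⟨a, ha, hle⟩ := exists_mem_Icc_le_integral hd2.integral_prod_left
  have hda : Continuous fun t => d (a, t) := hd.comp (Continuous.prodMk_right a)
  refine ⟨a, ha, integral_abs_le_of_integral_sq_le (ν := μI) hda.integrableOn_Icc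
    (hda.pow 2).integrableOn_Icc hG (hle.trans ?_)⟩
  rwa [← integral_prod _ hd2]

/- `f (a, b)` is the average of `f (a, b) - f (s, t)`, and each difference is estimated along
row `b` from `(a, b)` to `(s, b)`, then along column `s`. -/
theorem abs_le_of_integral_eq_zero {f d₁ d₂ : ℝ × ℝ → ℝ} (hf : Continuous f)
    (hd₁ : Continuous d₁) (hd₂ : Continuous d₂)
    (hf₁ : ∀ s t, HasDerivAt (fun s => f (s, t)) (d₁ (s, t)) s)
    (hf₂ : ∀ s t, HasDerivAt (fun t => f (s, t)) (d₂ (s, t)) t)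
    (hmean : ∫ p, f p ∂μI2 = 0) {a b : ℝ} (ha : a ∈ Icc (0 : ℝ) 1) (hb : b ∈ Icc (0 : ℝ) 1) :
    |f (a, b)| ≤ ∫ s, |d₁ (s, b)| ∂μI + ∫ p, |d₂ p| ∂μI2 := by
  set H : ℝ → ℝ := fun s => ∫ t, |d₂ (s, t)| ∂μI
  have hHint : Integrable H μI := (integrable_μI2_of_continuous hd₂.abs).integral_prod_left
  have hosc : ∀ᵐ p ∂μI2, |f (a, b) - f p| ≤ ∫ s, |d₁ (s, b)| ∂μI + H p.1 := by
    have hmem : ∀ᵐ p ∂μI2, p ∈ Icc (0 : ℝ) 1 ×ˢ Icc (0 : ℝ) 1 := by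
      rw [μI2_eq]
      exact ae_restrict_mem (measurableSet_Icc.prod measurableSet_Icc)
    filter_upwards [hmem] with ⟨s, t⟩ ⟨hs, ht⟩
    calc |f (a, b) - f (s, t)| ≤ |f (a, b) - f (s, b)| + |f (s, b) - f (s, t)| :=
          abs_sub_le _ _ _
      _ ≤ _ := add_le_add
          (abs_sub_le_integral_abs_deriv (hf₁ · b) (hd₁.comp (Continuous.prodMk_left b)) ha hs)
          (abs_sub_le_integral_abs_deriv (hf₂ s) (hd₂.comp (Continuous.prodMk_right s)) hb ht)
  calc |f (a, b)| = |∫ p, (f (a, b) - f p) ∂μI2| := by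
        rw [integral_sub (integrable_const _) (integrable_μI2_of_continuous hf), hmean]
        simp
    _ ≤ ∫ p, |f (a, b) - f p| ∂μI2 := abs_integral_le_integral_abs
    _ ≤ ∫ p, (∫ s, |d₁ (s, b)| ∂μI + H p.1) ∂μI2 :=
        integral_mono_ae ((integrable_const _).sub (integrable_μI2_of_continuous hf)).abs
          ((integrable_const _).add (hHint.comp_fst μI)) hosc
    _ = ∫ s, |d₁ (s, b)| ∂μI + ∫ p, |d₂ p| ∂μI2 := by
        rw [μI2, integral_add (integrable_const _) (hHint.comp_fst μI), integral_fun_fst,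
          integral_prod _ (integrable_μI2_of_continuous hd₂.abs)]
        simp [H]

theorem exists_cross_abs_le {f d₁ d₂ : ℝ × ℝ → ℝ} (hf : Continuous f)
    (hd₁ : Continuous d₁) (hd₂ : Continuous d₂)
    (hf₁ : ∀ s t, HasDerivAt (fun s => f (s, t)) (d₁ (s, t)) s)
    (hf₂ : ∀ s t, HasDerivAt (fun t => f (s, t)) (d₂ (s, t)) t)
    (hmean : ∫ p, f p ∂μI2 = 0) {G : ℝ} (hG : 0 ≤ G)
    (hG₁ : ∫ p, d₁ p ^ 2 ∂μI2 ≤ G ^ 2) (hG₂ : ∫ p, d₂ p ^ 2 ∂μI2 ≤ G ^ 2) :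
    ∃ a ∈ Icc (0 : ℝ) 1, ∃ b ∈ Icc (0 : ℝ) 1,
      ∀ t ∈ Icc (0 : ℝ) 1, |f (a, t)| ≤ 3 * G ∧ |f (t, b)| ≤ 3 * G := by
  obtain ⟨a, ha, hda⟩ := exists_line_integral_abs_le hd₂ hG hG₂
  obtain ⟨b, hb, hdb⟩ := exists_line_integral_abs_le (d := fun p => d₁ p.swap)
    (hd₁.comp continuous_swap) hG (by rwa [μI2, integral_prod_swap fun p => d₁ p ^ 2])
  simp only [Prod.swap_prod_mk] at hdb
  have hd₂G : ∫ p, |d₂ p| ∂μI2 ≤ G := integral_abs_le_of_integral_sq_le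
    (integrable_μI2_of_continuous hd₂) (integrable_μI2_of_continuous (hd₂.pow 2)) hG hG₂
  have hcenter := abs_le_of_integral_eq_zero hf hd₁ hd₂ hf₁ hf₂ hmean ha hb
  refine ⟨a, ha, b, hb, fun t ht => ⟨?_, ?_⟩⟩
  · have := abs_sub_le_integral_abs_deriv (hf₂ a) (hd₂.comp (Continuous.prodMk_right a)) ht hb
    linarith [abs_sub_abs_le_abs_sub (f (a, t)) (f (a, b))]
  · have := abs_sub_le_integral_abs_deriv (hf₁ · b) (hd₁.comp (Continuous.prodMk_left b)) ht ha
    linarith [abs_sub_abs_le_abs_sub (f (t, b)) (f (a, b))]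

theorem le_add_abs_of_shift {g : ℝ → ℝ} {α M : ℝ} (hg : ∀ t, g (t + 1) = g t + α)
    (hM : ∀ t ∈ Icc (0 : ℝ) 1, |g t| ≤ M) : ∀ t ∈ Icc (-1 : ℝ) 2, g t ≤ M + |α| := by
  rintro t ⟨ht₁, ht₂⟩
  rcases lt_or_ge t 0 with h₀ | h₀
  · have := hM (t + 1) ⟨by linarith, by linarith⟩
    linarith [hg t, le_abs_self (g (t + 1)), neg_abs_le α]
  rcases le_or_gt t 1 with h₁ | h₁
  · linarith [le_abs_self (g t), hM t ⟨h₀, h₁⟩, abs_nonneg α]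
  · have := hM (t - 1) ⟨by linarith, by linarith⟩
    have hshift := hg (t - 1)
    rw [sub_add_cancel] at hshift
    linarith [le_abs_self (g (t - 1)), le_abs_self α]

theorem le_of_mem_frontier_box {f : ℝ × ℝ → ℝ} {α₁ α₂ M a b : ℝ}
    (h₁ : ∀ s t, f (s + 1, t) = f (s, t) + α₁) (h₂ : ∀ s t, f (s, t + 1) = f (s, t) + α₂)
    (ha : a ∈ Icc (0 : ℝ) 1) (hb : b ∈ Icc (0 : ℝ) 1)
    (hcross : ∀ t ∈ Icc (0 : ℝ) 1, |f (a, t)| ≤ M ∧ |f (t, b)| ≤ M) :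
    ∀ p ∈ frontier (Icc (a - 1) (a + 1) ×ˢ Icc (b - 1) (b + 1)), f p ≤ M + |α₁| + |α₂| := by
  have hv : ∀ t ∈ Icc (b - 1) (b + 1), f (a, t) ≤ M + |α₂| := fun t ht =>
    le_add_abs_of_shift (h₂ a) (fun t ht => (hcross t ht).1) t
      ⟨by linarith [ht.1, hb.1], by linarith [ht.2, hb.2]⟩
  have hh : ∀ s ∈ Icc (a - 1) (a + 1), f (s, b) ≤ M + |α₁| := fun s hs =>
    le_add_abs_of_shift (h₁ · b) (fun t ht => (hcross t ht).2) s
      ⟨by linarith [hs.1, ha.1], by linarith [hs.2, ha.2]⟩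
  rintro ⟨s, t⟩ hp
  rw [frontier_prod_eq, closure_Icc, closure_Icc, frontier_Icc (by linarith),
    frontier_Icc (by linarith)] at hp
  rcases hp with ⟨hs, ht⟩ | ⟨hs, ht⟩
  · rcases ht with rfl | rfl
    · have := h₂ s (b - 1)
      rw [sub_add_cancel] at this
      linarith [hh s hs, neg_abs_le α₂, abs_nonneg α₁]
    · linarith [h₂ s b, hh s hs, le_abs_self α₂, abs_nonneg α₁]
  · rcases hs with rfl | rfl
    · have := h₁ (a - 1) t
      rw [sub_add_cancel] at this
      linarith [hv t ht, neg_abs_le α₁]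
    · linarith [h₁ a t, hv t ht, le_abs_self α₁]

theorem _root_.IsLocalMax.deriv_deriv_nonpos {φ : ℝ → ℝ} {t : ℝ} (h : IsLocalMax φ t)
    (hc : ContinuousAt φ t) : deriv (deriv φ) t ≤ 0 := by
  by_contra! hpos
  have hmin := isLocalMin_of_deriv_deriv_pos hpos h.deriv_eq_zero hc
  have hconst : φ =ᶠ[𝓝 t] fun _ => φ t := (h.and hmin).mono fun s hs => le_antisymm hs.1 hs.2
  rw [hconst.deriv.deriv_eq] at hpos
  simp at hpos

section InnerProductSpace

variable {E : Type*} [NormedAddCommGroup E] [InnerProductSpace ℝ E] [CompleteSpace E]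

theorem _root_.ContDiff.differentiable_gradient {f : E → ℝ} (hf : ContDiff ℝ 2 f) :
    Differentiable ℝ (gradient f) :=
  (InnerProductSpace.toDual ℝ E).symm.toContinuousLinearEquiv.differentiable.comp
    ((hf.fderiv_right (m := 1) (by norm_num)).differentiable (by norm_num))

theorem hasDerivAt_comp_add_smul {f : E → ℝ} {x v : E} {t : ℝ}
    (hf : DifferentiableAt ℝ f (x + t • v)) :
    HasDerivAt (fun s => f (x + s • v)) ⟪gradient f (x + t • v), v⟫ t := by
  have hline : HasDerivAt (fun s : ℝ => x + s • v) v t := by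
    simpa using ((hasDerivAt_id t).smul_const v).const_add x
  rw [show ⟪gradient f (x + t • v), v⟫ = fderiv ℝ f (x + t • v) v by simp [gradient]]
  exact hf.hasFDerivAt.comp_hasDerivAt t hline

theorem _root_.IsLocalMax.inner_fderiv_gradient_nonpos {f : E → ℝ} {x : E} (h : IsLocalMax f x)
    (hf : Differentiable ℝ f) (hg : DifferentiableAt ℝ (gradient f) x) (v : E) :
    ⟪fderiv ℝ (gradient f) x v, v⟫ ≤ 0 := by
  have hline : HasDerivAt (fun s : ℝ => x + s • v) v 0 := by
    simpa using ((hasDerivAt_id (0 : ℝ)).smul_const v).const_add x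
  have hderiv : deriv (fun s : ℝ => f (x + s • v)) = fun s => ⟪gradient f (x + s • v), v⟫ :=
    funext fun s => (hasDerivAt_comp_add_smul (hf _)).deriv
  have hderiv₂ : HasDerivAt (fun s : ℝ => ⟪gradient f (x + s • v), v⟫)
      ⟪fderiv ℝ (gradient f) x v, v⟫ 0 := by
    have hg' : HasFDerivAt (gradient f) (fderiv ℝ (gradient f) x) (x + (0 : ℝ) • v) := by
      simpa using hg.hasFDerivAt
    simpa using (hg'.comp_hasDerivAt 0 hline).inner ℝ (hasDerivAt_const 0 v)
  have hcont : ContinuousAt (fun s : ℝ => x + s • v) 0 := hline.continuousAt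
  have hmax : IsLocalMax (fun s : ℝ => f (x + s • v)) 0 :=
    IsLocalMax.comp_continuous (g := fun s : ℝ => x + s • v) (by simpa using h) hcont
  have := hmax.deriv_deriv_nonpos ((hf _).continuousAt.comp hcont)
  rwa [hderiv, hderiv₂.deriv] at this

theorem gradient_add_const_mul {f g : E → ℝ} (hf : Differentiable ℝ f)
    (hg : Differentiable ℝ g) (c : ℝ) :
    gradient (fun x => f x + c * g x) = gradient f + c • gradient g := by
  ext1 x
  simp [gradient, fderiv_fun_add (hf x) ((hg x).const_mul c), fderiv_const_mul (hg x)]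

end InnerProductSpace

theorem _root_.IsLocalMax.lap_nonpos {f : ℝ² → ℝ} {x : ℝ²} (h : IsLocalMax f x)
    (hf : ContDiff ℝ 2 f) : lap f x ≤ 0 :=
  Finset.sum_nonpos fun _ _ => h.inner_fderiv_gradient_nonpos (hf.differentiable (by norm_num))
    (hf.differentiable_gradient x) _

theorem lap_add_const_mul {f g : ℝ² → ℝ} (hf : ContDiff ℝ 2 f) (hg : ContDiff ℝ 2 g) (c : ℝ)
    (x : ℝ²) : lap (fun x => f x + c * g x) x = lap f x + c * lap g x := by
  have hf' := hf.differentiable_gradient x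
  have hg' := hg.differentiable_gradient x
  rw [lap, lap, lap, gradient_add_const_mul (hf.differentiable (by norm_num))
    (hg.differentiable (by norm_num)), fderiv_add hf' (hg'.const_smul c),
    fderiv_const_smul hg', Finset.mul_sum, ← Finset.sum_add_distrib]
  simp [inner_add_left, real_inner_smul_left]

def expWeight (l : ℝ) (x : ℝ²) : ℝ := Real.exp (l * x 0)

theorem expWeight_pos (l : ℝ) (x : ℝ²) : 0 < expWeight l x := Real.exp_pos _

theorem contDiff_expWeight (l : ℝ) : ContDiff ℝ 2 (expWeight l) :=
  Real.contDiff_exp.comp (contDiff_const.mul (EuclideanSpace.proj 0 : ℝ² →L[ℝ] ℝ).contDiff)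

theorem hasFDerivAt_expWeight (l : ℝ) (x : ℝ²) :
    HasFDerivAt (expWeight l) ((l * expWeight l x) • (EuclideanSpace.proj 0 : ℝ² →L[ℝ] ℝ)) x := by
  have := ((EuclideanSpace.proj 0 : ℝ² →L[ℝ] ℝ).hasFDerivAt (x := x).const_mul l).exp
  refine this.congr_fderiv ?_
  ext v
  simp [expWeight]
  ring

theorem gradient_expWeight (l : ℝ) :
    gradient (expWeight l) = fun x => (l * expWeight l x) • EuclideanSpace.single 0 1 := by
  ext1 x
  rw [gradient, (hasFDerivAt_expWeight l x).fderiv, LinearIsometryEquiv.symm_apply_eq]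
  ext v
  simp [EuclideanSpace.inner_single_left]

theorem lap_expWeight (l : ℝ) (x : ℝ²) : lap (expWeight l) x = l ^ 2 * expWeight l x := by
  have hderiv : HasFDerivAt (fun y => (l * expWeight l y) • (EuclideanSpace.single 0 1 : ℝ²))
      (((l * (l * expWeight l x)) • (EuclideanSpace.proj 0 : ℝ² →L[ℝ] ℝ)).smulRight
        (EuclideanSpace.single 0 1 : ℝ²)) x := by
    refine (((hasFDerivAt_expWeight l x).const_mul l).smul_const _).congr_fderiv ?_
    rw [smul_smul]
  rw [lap, gradient_expWeight, hderiv.fderiv]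
  simp [Fin.sum_univ_two, real_inner_smul_left]
  ring

theorem not_isLocalMax_add_expWeight {q : ℝ² → ℝ} (hq : ContDiff ℝ 2 q) {A : ℝ} {u : ℝ² → ℝ²}
    {x : ℝ²} (hpde : 0 ≤ lap q x - A * ⟪u x, gradient q x⟫ + ‖gradient q x‖ ^ 2) {l ε : ℝ}
    (hl : 0 < l) (hε : 0 < ε) (hu : A * u x 0 ≤ l - 1) (hsmall : ε * l * expWeight l x ≤ 1 / 2) :
    ¬IsLocalMax (fun y => q y + ε * expWeight l y) x := by
  intro hmax
  have hw := expWeight_pos l x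
  set c := ε * l * expWeight l x
  have hc : 0 < c := by positivity
  have hqd : Differentiable ℝ q := hq.differentiable (by norm_num)
  have hwd : Differentiable ℝ (expWeight l) := (contDiff_expWeight l).differentiable (by norm_num)
  have hgrad : gradient q x = (-c) • EuclideanSpace.single 0 1 := by
    have h0 : gradient (fun y => q y + ε * expWeight l y) x = 0 := by
      simp [gradient, hmax.fderiv_eq_zero]
    rw [gradient_add_const_mul hqd hwd, gradient_expWeight] at h0
    simp only [Pi.add_apply, Pi.smul_apply, smul_smul] at h0
    rw [eq_neg_of_add_eq_zero_left h0, neg_smul, ← mul_assoc]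
  have hlap : lap q x + l * c ≤ 0 := by
    have := hmax.lap_nonpos (hq.add (contDiff_const.mul (contDiff_expWeight l)))
    rw [lap_add_const_mul hq (contDiff_expWeight l), lap_expWeight] at this
    linarith
  rw [hgrad] at hpde
  simp [inner_smul_right, norm_smul, EuclideanSpace.inner_single_right] at hpde
  nlinarith [mul_le_mul_of_nonneg_left hu hc.le, mul_le_mul_of_nonneg_left hsmall hc.le]

theorem le_of_forall_mem_frontier_le {q : ℝ² → ℝ} (hq : ContDiff ℝ 2 q) {A : ℝ}
    {u : ℝ² → ℝ²} (hu : Continuous u)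
    (hpde : ∀ x, 0 ≤ lap q x - A * ⟪u x, gradient q x⟫ + ‖gradient q x‖ ^ 2)
    {S : Set ℝ²} (hS : IsCompact S) {M : ℝ} (hM : ∀ x ∈ frontier S, q x ≤ M) :
    ∀ x ∈ S, q x ≤ M := by
  intro x hx
  obtain ⟨U, hU⟩ := hS.bddAbove_image (f := fun y => A * u y 0) (by fun_prop)
  set l := max U 0 + 1
  have hl : 0 < l := by positivity
  obtain ⟨B, hB⟩ := hS.bddAbove_image (contDiff_expWeight l).continuous.continuousOn
  have hB0 : 0 < B := (expWeight_pos l x).trans_le (hB ⟨x, hx, rfl⟩)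
  refine le_of_forall_pos_le_add fun η hη => ?_
  set ε := min (η / B) (1 / (2 * l * B))
  have hε : 0 < ε := by positivity
  have hg : Continuous fun y => q y + ε * expWeight l y :=
    hq.continuous.add (continuous_const.mul (contDiff_expWeight l).continuous)
  obtain ⟨x₀, hx₀, hmax⟩ := hS.exists_isMaxOn ⟨x, hx⟩ hg.continuousOn
  have hwB : expWeight l x₀ ≤ B := hB ⟨x₀, hx₀, rfl⟩
  have hx₀S : x₀ ∈ frontier S := by
    rw [frontier, hS.isClosed.closure_eq]
    refine ⟨hx₀, fun hint => not_isLocalMax_add_expWeight hq (hpde x₀) hl hε ?_ ?_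
      (hmax.isLocalMax (mem_interior_iff_mem_nhds.1 hint))⟩
    · linarith [hU ⟨x₀, hx₀, rfl⟩, le_max_left U 0]
    · calc ε * l * expWeight l x₀ ≤ 1 / (2 * l * B) * l * B :=
            mul_le_mul (mul_le_mul_of_nonneg_right (min_le_right _ _) hl.le) hwB
              (expWeight_pos l x₀).le (by positivity)
        _ = 1 / 2 := by field_simp
  calc q x ≤ q x + ε * expWeight l x := le_add_of_nonneg_right (mul_pos hε (expWeight_pos l x)).le
    _ ≤ q x₀ + ε * expWeight l x₀ := hmax hx
    _ ≤ M + η / B * B := add_le_add (hM x₀ hx₀S)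
          (mul_le_mul (min_le_left _ _) hwB (expWeight_pos l x₀).le (by positivity))
    _ = M + η := by field_simp

def coord : ℝ² ≃L[ℝ] ℝ × ℝ :=
  (EuclideanSpace.equiv (Fin 2) ℝ).trans (ContinuousLinearEquiv.finTwoArrow ℝ ℝ)

theorem coord_apply (x : ℝ²) : coord x = (x 0, x 1) := rfl

theorem coord_symm_apply (p : ℝ × ℝ) :
    coord.symm p = p.1 • EuclideanSpace.single 0 1 + p.2 • EuclideanSpace.single 1 1 := by
  apply coord.injective
  simp [coord_apply]

theorem coord_symm_add_single_zero (s t : ℝ) :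
    coord.symm (s, t) + EuclideanSpace.single 0 1 = coord.symm (s + 1, t) := by
  simp only [coord_symm_apply]
  module

theorem coord_symm_add_single_one (s t : ℝ) :
    coord.symm (s, t) + EuclideanSpace.single 1 1 = coord.symm (s, t + 1) := by
  simp only [coord_symm_apply]
  module

theorem cube2_eq_preimage_coord : cube2 = coord ⁻¹' (Icc 0 1 ×ˢ Icc 0 1) := by
  ext x
  simp only [cube2, Fin.forall_fin_two, mem_ofPred_eq, mem_preimage, coord_apply, mem_prod]

theorem measurableSet_cube2 : MeasurableSet cube2 := by
  rw [cube2_eq_preimage_coord]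
  exact (measurableSet_Icc.prod measurableSet_Icc).preimage coord.continuous.measurable

theorem setIntegral_cube2 (F : ℝ² → ℝ) : ∫ x in cube2, F x = ∫ p, F (coord.symm p) ∂μI2 := by
  have hmp : MeasurePreserving coord volume volume :=
    (volume_preserving_finTwoArrow ℝ).comp (PiLp.volume_preserving_ofLp (Fin 2))
  rw [μI2_eq, ← hmp.setIntegral_preimage_emb coord.toHomeomorph.measurableEmbedding,
    cube2_eq_preimage_coord]
  simp only [ContinuousLinearEquiv.symm_apply_apply]

theorem hasDerivAt_comp_coord_symm_fst {q : ℝ² → ℝ} (hq : Differentiable ℝ q) (s t : ℝ) :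
    HasDerivAt (fun s => q (coord.symm (s, t))) (gradient q (coord.symm (s, t)) 0) s := by
  have hline : ∀ r : ℝ, (t • EuclideanSpace.single 1 1 : ℝ²) + r • EuclideanSpace.single 0 1 =
      coord.symm (r, t) := fun r => by rw [coord_symm_apply, add_comm]
  have h := hasDerivAt_comp_add_smul (t := s) (hq ((t • EuclideanSpace.single 1 1 : ℝ²) +
    s • EuclideanSpace.single 0 1))
  simpa only [hline, EuclideanSpace.inner_single_right, one_mul, conj_trivial] using h

theorem hasDerivAt_comp_coord_symm_snd {q : ℝ² → ℝ} (hq : Differentiable ℝ q) (s t : ℝ) :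
    HasDerivAt (fun t => q (coord.symm (s, t))) (gradient q (coord.symm (s, t)) 1) t := by
  have hline : ∀ r : ℝ, (s • EuclideanSpace.single 0 1 : ℝ²) + r • EuclideanSpace.single 1 1 =
      coord.symm (s, r) := fun r => by rw [coord_symm_apply]
  have h := hasDerivAt_comp_add_smul (t := t) (hq ((s • EuclideanSpace.single 0 1 : ℝ²) +
    t • EuclideanSpace.single 1 1))
  simpa only [hline, EuclideanSpace.inner_single_right, one_mul, conj_trivial] using h

theorem exists_cross_abs_le_of_setIntegral_eq_zero {q : ℝ² → ℝ} (hq : ContDiff ℝ 2 q)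
    (hmean : ∫ x in cube2, q x = 0) :
    ∃ a ∈ Icc (0 : ℝ) 1, ∃ b ∈ Icc (0 : ℝ) 1, ∀ t ∈ Icc (0 : ℝ) 1,
      |q (coord.symm (a, t))| ≤ 3 * √(∫ x in cube2, ‖gradient q x‖ ^ 2) ∧
      |q (coord.symm (t, b))| ≤ 3 * √(∫ x in cube2, ‖gradient q x‖ ^ 2) := by
  have hqd : Differentiable ℝ q := hq.differentiable (by norm_num)
  have hgc : Continuous fun p => gradient q (coord.symm p) :=
    hq.differentiable_gradient.continuous.comp coord.symm.continuous
  have hG : √(∫ x in cube2, ‖gradient q x‖ ^ 2) ^ 2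
      = ∫ p, (gradient q (coord.symm p) 0 ^ 2 + gradient q (coord.symm p) 1 ^ 2) ∂μI2 := by
    rw [Real.sq_sqrt (setIntegral_nonneg measurableSet_cube2 fun _ _ => sq_nonneg _),
      setIntegral_cube2]
    simp [EuclideanSpace.norm_sq_eq, Fin.sum_univ_two]
  have hcomp : ∀ i, Continuous fun p => gradient q (coord.symm p) i := fun i => by fun_prop
  have hle : ∀ i, ∫ p, gradient q (coord.symm p) i ^ 2 ∂μI2
      ≤ √(∫ x in cube2, ‖gradient q x‖ ^ 2) ^ 2 := fun i => by
    rw [hG]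
    refine integral_mono (integrable_μI2_of_continuous ((hcomp i).pow 2))
      (integrable_μI2_of_continuous (((hcomp 0).pow 2).add ((hcomp 1).pow 2))) fun p => ?_
    fin_cases i <;> simp [sq_nonneg]
  exact exists_cross_abs_le (hq.continuous.comp coord.symm.continuous) (hcomp 0) (hcomp 1)
    (hasDerivAt_comp_coord_symm_fst hqd) (hasDerivAt_comp_coord_symm_snd hqd)
    (by rwa [setIntegral_cube2] at hmean) (Real.sqrt_nonneg _) (hle 0) (hle 1)

end PeriodicSubsolution

open PeriodicSubsolution

/-- There is a universal constant `C > 0` such that whenever `q` satisfies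
`Δq - A u·∇q + |∇q|² ≥ 0` with Lipschitz divergence-free `u`, the shift conditions
`q(x₁+1,x₂) = q(x₁,x₂) + α₁`, `q(x₁,x₂+1) = q(x₁,x₂) + α₂`, and has mean zero on `[0,1]²`,
then `q(x) ≤ C(‖∇q‖_{L²([0,1]²)} + |α₁| + |α₂|)` on `[0,1]²`. -/
theorem stmt8 :
    ∃ C : ℝ, 0 < C ∧
      ∀ (α₁ α₂ A : ℝ) (u : EuclideanSpace ℝ (Fin 2) → EuclideanSpace ℝ (Fin 2))
        (K : NNReal), LipschitzWith K u → (∀ x, divg u x = 0) →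
        ∀ q : EuclideanSpace ℝ (Fin 2) → ℝ, ContDiff ℝ 2 q →
        (∀ x, 0 ≤ lap q x - A * ⟪u x, gradient q x⟫ + ‖gradient q x‖ ^ 2) →
        (∀ x, q (x + EuclideanSpace.single 0 1) = q x + α₁) →
        (∀ x, q (x + EuclideanSpace.single 1 1) = q x + α₂) →
        (∫ x in cube2, q x) = 0 →
        ∀ x ∈ cube2,
          q x ≤ C * (Real.sqrt (∫ y in cube2, ‖gradient q y‖ ^ 2) + |α₁| + |α₂|) := by
  refine ⟨3, by norm_num, fun α₁ α₂ A u K hu _ q hq hpde hper₁ hper₂ hmean x hx => ?_⟩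
  obtain ⟨a, ha, b, hb, hcross⟩ := exists_cross_abs_le_of_setIntegral_eq_zero hq hmean
  have hbox := le_of_mem_frontier_box (f := fun p => q (coord.symm p))
    (fun s t => by rw [← coord_symm_add_single_zero, hper₁])
    (fun s t => by rw [← coord_symm_add_single_one, hper₂]) ha hb hcross
  set box := Icc (a - 1) (a + 1) ×ˢ Icc (b - 1) (b + 1)
  have hcompact : IsCompact (coord.toHomeomorph ⁻¹' box) :=
    coord.toHomeomorph.isCompact_preimage.2 (isCompact_Icc.prod isCompact_Icc)
  have hfrontier : ∀ y ∈ frontier (coord.toHomeomorph ⁻¹' box),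
      q y ≤ 3 * √(∫ y in cube2, ‖gradient q y‖ ^ 2) + |α₁| + |α₂| := fun y hy => by
    simpa only [ContinuousLinearEquiv.symm_apply_apply] using
      hbox (coord y) (by rwa [← coord.toHomeomorph.preimage_frontier] at hy)
  have hx_box : (x 0, x 1) ∈ box := ⟨⟨by linarith [(hx 0).1, ha.2], by linarith [(hx 0).2, ha.1]⟩,
    by linarith [(hx 1).1, hb.2], by linarith [(hx 1).2, hb.1]⟩
  have hq_le := le_of_forall_mem_frontier_le hq hu.continuous hpde hcompact hfrontier x hx_box
  linarith [abs_nonneg α₁, abs_nonneg α₂, Real.sqrt_nonneg (∫ y in cube2, ‖gradient q y‖ ^ 2)]
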